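/- Define σ̃ : ℝ × ℝ^{m−1} → ℝ^N by σ̃(t, u^1, …, u^{m−1}) = β(t, u^1, …, u^{m−d−1}) + Σ_{h=m−d}^{m−1} u^h X_h(t). Then the differential of σ̃ at (t, u^1, …, u^{m−1}) fails to be injective if and only if u^{m−d} = … = u^{m−1} = 0 and the vectors (∂β/∂t)(t, u^1, …, u^{m−d−1}), X_1(t), …, X_{m−1}(t) are linearly dependent. In particular, the only singular points of the ruled submanifold, if any, lie along its striction submanifold β. -/

import Mathlib

/-!
In the `u`-directions `dσ̃` is a triangular change of coefficients followed by
`c ↦ Σᵢ cᵢ Xᵢ(t)`, hence an isomorphism onto `D_t`; so `dσ̃` has a kernel iff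
`∂σ̃/∂t = ∂β/∂t + Σₕ uʰ Ẋₕ` lies in `D_t`. Projecting onto `D_tᗮ` turns this into
`π(∂β/∂t) + Σₕ uʰ ρXₕ = 0`. By the striction condition the first term is orthogonal to every
`ρXₕ`, so both terms vanish; independence of the `ρXₕ` forces all `uʰ = 0`, leaving
`∂β/∂t ∈ D_t`.
-/

open Function
open scoped RealInnerProductSpace

theorem bijective_sumElim_of_val_eq {a b c : ℕ} {f : Fin a → Fin c} {g : Fin b → Fin c}
    (hf : ∀ i, (f i : ℕ) = i) (hg : ∀ k, (g k : ℕ) = a + k) (habc : a + b = c) :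
    Bijective (Sum.elim f g) := by
  have : Sum.elim f g = finCongr habc ∘ finSumFinEquiv := by
    ext (i | k) <;> simp [hf, hg]
  exact this ▸ (finCongr habc).bijective.comp finSumFinEquiv.bijective

theorem eq_zero_of_sum_smul_add_sum_smul_eq_zero {R M ι κ μ : Type*} [Ring R] [AddCommGroup M]
    [Module R M] [Fintype κ] [Fintype μ] {jdx : κ → ι} {idx : μ → ι}
    (hbij : Bijective (Sum.elim jdx idx)) {x : ι → M} (hx : LinearIndependent R x)
    (c : μ → (κ → R) →ₗ[R] R) {v : ι → R}
    (hv : ∑ j, v (jdx j) • x (jdx j)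
      + ∑ h, (c h (fun j => v (jdx j)) + v (idx h)) • x (idx h) = 0) :
    v = 0 := by
  have hcoef := Fintype.linearIndependent_iff.mp (hx.comp _ hbij.injective)
    (Sum.elim (fun j => v (jdx j)) fun h => c h (fun j => v (jdx j)) + v (idx h))
    (by simpa [Fintype.sum_sum_type] using hv)
  have hj : (fun j => v (jdx j)) = 0 := funext fun j => hcoef (Sum.inl j)
  funext i
  obtain ⟨k | h, rfl⟩ := hbij.2 i
  · exact hcoef (Sum.inl k)
  · simpa [hj] using hcoef (Sum.inr h)

theorem not_linearIndependent_vecCons_iff {K V : Type*} [DivisionRing K] [AddCommGroup V]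
    [Module K V] {n : ℕ} {x : Fin n → V} (hx : LinearIndependent K x) (a : V) :
    ¬ LinearIndependent K (Matrix.vecCons a x) ↔ a ∈ Submodule.span K (Set.range x) := by
  rw [Matrix.vecCons, linearIndependent_finCons]
  simp [hx]

theorem LinearMap.not_injective_iff_apply_inl_mem_range {𝕜 W V : Type*} [Field 𝕜]
    [AddCommGroup W] [Module 𝕜 W] [AddCommGroup V] [Module 𝕜 V] (L : 𝕜 × W →ₗ[𝕜] V)
    (hT : Injective (L ∘ₗ LinearMap.inr 𝕜 𝕜 W)) :
    ¬ Injective L ↔ L (1, 0) ∈ LinearMap.range (L ∘ₗ LinearMap.inr 𝕜 𝕜 W) := by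
  set T := L ∘ₗ LinearMap.inr 𝕜 𝕜 W
  have hsplit : ∀ τ v, L (τ, v) = τ • L (1, 0) + T v := fun τ v => by
    rw [← map_smul, LinearMap.comp_apply, LinearMap.inr_apply, ← map_add]
    simp
  constructor
  · intro hL
    obtain ⟨⟨τ, v⟩, hx0, hne⟩ : ∃ x, L x = 0 ∧ x ≠ 0 := by
      simpa [injective_iff_map_eq_zero, not_forall] using hL
    have hτ : τ ≠ 0 := by
      rintro rfl
      rw [hsplit, zero_smul, zero_add, ← map_zero T] at hx0
      exact hne (by rw [hT hx0]; rfl)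
    refine ⟨-τ⁻¹ • v, ?_⟩
    rw [hsplit, add_eq_zero_iff_eq_neg] at hx0
    rw [map_smul, neg_smul, ← smul_neg, ← hx0, smul_smul, inv_mul_cancel₀ hτ, one_smul]
  · rintro ⟨w, hw⟩ hL
    have : L (1, -w) = 0 := by
      rw [hsplit, one_smul, map_neg, hw, add_neg_cancel]
    simpa using hL (this.trans (map_zero L).symm)

theorem Submodule.add_sum_smul_mem_iff {E ι : Type*} [NormedAddCommGroup E]
    [InnerProductSpace ℝ E] [Fintype ι] (K : Submodule ℝ E) [K.HasOrthogonalProjection]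
    {a : E} {y : ι → E}
    (hind : LinearIndependent ℝ fun i => (Kᗮ.orthogonalProjectionOnto (y i) : E))
    (horth : ∀ i, ⟪a, Kᗮ.orthogonalProjectionOnto (y i)⟫ = 0) (c : ι → ℝ) :
    a + ∑ i, c i • y i ∈ K ↔ (∀ i, c i = 0) ∧ a ∈ K := by
  set P := Kᗮ.starProjection
  set ρ := fun i => (Kᗮ.orthogonalProjectionOnto (y i) : E)
  have hmem : ∀ x, x ∈ K ↔ P x = 0 := fun x => by
    rw [Submodule.starProjection_apply_eq_zero_iff, Submodule.orthogonal_orthogonal]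
  have hPa : ∀ i, ⟪P a, ρ i⟫ = 0 := fun i => by
    rw [← horth i]
    exact Submodule.inner_orthogonalProjectionOnto_eq_of_mem_right _ _
  have hP : P (a + ∑ i, c i • y i) = P a + ∑ i, c i • ρ i := by
    simp only [map_add, map_sum, map_smul]
    rfl
  refine ⟨fun h => ?_, fun ⟨hc, ha⟩ => by simpa [hc] using ha⟩
  rw [hmem, hP] at h
  have hPa0 : P a = 0 := by
    have h' := congrArg (⟪P a, ·⟫) h
    simp only [inner_add_right, inner_sum, real_inner_smul_right, hPa, mul_zero,
      Finset.sum_const_zero, add_zero, inner_zero_right] at h'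
    exact inner_self_eq_zero.mp h'
  rw [hPa0, zero_add] at h
  exact ⟨Fintype.linearIndependent_iff.mp hind c h, (hmem a).mpr hPa0⟩

section PartialDerivatives

variable {𝕜 E F G : Type*} [NontriviallyNormedField 𝕜] [NormedAddCommGroup E] [NormedSpace 𝕜 E]
  [NormedAddCommGroup F] [NormedSpace 𝕜 F] [NormedAddCommGroup G] [NormedSpace 𝕜 G]

theorem fderiv_apply_one_zero_eq_deriv {f : 𝕜 × E → F} {t : 𝕜} {u : E}
    (hf : DifferentiableAt 𝕜 f (t, u)) :
    fderiv 𝕜 f (t, u) (1, 0) = deriv (fun τ => f (τ, u)) t := by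
  have h := (hf.hasFDerivAt.comp t (hasFDerivAt_prodMk_left t u)).hasDerivAt
  exact h.deriv.symm

theorem fderiv_apply_zero_eq_fderiv {f : G × E → F} {t : G} {u : E}
    (hf : DifferentiableAt 𝕜 f (t, u)) (v : E) :
    fderiv 𝕜 f (t, u) (0, v) = fderiv 𝕜 (fun w => f (t, w)) u v := by
  rw [show (fun w => f (t, w)) = f ∘ Prod.mk t from rfl,
    (hf.hasFDerivAt.comp u (hasFDerivAt_prodMk_right t u)).fderiv]
  rfl

end PartialDerivatives

section RuledMap

variable {E : Type*} [NormedAddCommGroup E] [NormedSpace ℝ E] {ι κ μ : Type*}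
  [Fintype κ] [Fintype μ]

/-- The paper's striction submanifold `β`. -/
def strictionMap (γ : ℝ → E) (X : ι → ℝ → E) (jdx : κ → ι) (idx : μ → ι)
    (s : μ → ℝ × (κ → ℝ) → ℝ) (t : ℝ) (a : κ → ℝ) : E :=
  γ t + ∑ j, a j • X (jdx j) t + ∑ h, s h (t, a) • X (idx h) t

/-- The paper's `σ̃`. -/
def ruledMap (γ : ℝ → E) (X : ι → ℝ → E) (jdx : κ → ι) (idx : μ → ι)
    (s : μ → ℝ × (κ → ℝ) → ℝ) (p : ℝ × (ι → ℝ)) : E :=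
  strictionMap γ X jdx idx s p.1 (fun j => p.2 (jdx j)) + ∑ h, p.2 (idx h) • X (idx h) p.1

variable {γ : ℝ → E} {X : ι → ℝ → E} {jdx : κ → ι} {idx : μ → ι} {s : μ → ℝ × (κ → ℝ) → ℝ}
  (hγ : Differentiable ℝ γ) (hX : ∀ i, Differentiable ℝ (X i)) (hs : ∀ h, Differentiable ℝ (s h))
include hγ hX hs

theorem differentiable_strictionMap (a : κ → ℝ) :
    Differentiable ℝ (strictionMap γ X jdx idx s · a) := by
  unfold strictionMap
  fun_prop

variable [Fintype ι]

theorem differentiable_ruledMap : Differentiable ℝ (ruledMap γ X jdx idx s) := by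
  unfold ruledMap strictionMap
  fun_prop

theorem fderiv_ruledMap_apply_one_zero (t : ℝ) (u : ι → ℝ) :
    fderiv ℝ (ruledMap γ X jdx idx s) (t, u) (1, 0) =
      deriv (strictionMap γ X jdx idx s · fun j => u (jdx j)) t
        + ∑ h, u (idx h) • deriv (X (idx h)) t := by
  rw [fderiv_apply_one_zero_eq_deriv (differentiable_ruledMap hγ hX hs _)]
  change deriv (fun τ => strictionMap γ X jdx idx s τ (fun j => u (jdx j))
    + ∑ h, u (idx h) • X (idx h) τ) t = _
  rw [deriv_fun_add (differentiable_strictionMap hγ hX hs _ t) (by fun_prop),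
    deriv_fun_sum (by fun_prop)]
  simp only [deriv_fun_const_smul _ ((hX _) t)]

theorem fderiv_ruledMap_apply_zero (t : ℝ) (u v : ι → ℝ) :
    fderiv ℝ (ruledMap γ X jdx idx s) (t, u) (0, v) =
      ∑ j, v (jdx j) • X (jdx j) t + ∑ h, (fderiv ℝ (fun a => s h (t, a)) (fun j => u (jdx j))
        (fun j => v (jdx j)) + v (idx h)) • X (idx h) t := by
  rw [fderiv_apply_zero_eq_fderiv (differentiable_ruledMap hγ hX hs _)]
  have hproj : ∀ i, HasFDerivAt (fun w : ι → ℝ => w i) (ContinuousLinearMap.proj i) u :=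
    fun i => hasFDerivAt_apply (𝕜 := ℝ) (F' := fun _ => ℝ) i u
  have hres : HasFDerivAt (fun w : ι → ℝ => fun j => w (jdx j))
      (ContinuousLinearMap.pi fun j => ContinuousLinearMap.proj (jdx j)) u :=
    hasFDerivAt_pi.mpr fun j => hproj (jdx j)
  have hsh : ∀ h, HasFDerivAt (fun w : ι → ℝ => s h (t, fun j => w (jdx j)))
      ((fderiv ℝ (fun a => s h (t, a)) (fun j => u (jdx j))).comp
        (ContinuousLinearMap.pi fun j => ContinuousLinearMap.proj (jdx j))) u := fun h =>
    (((hs h).comp ((differentiable_const t).prodMk differentiable_id)) _).hasFDerivAt.comp u hres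
  have hfd : HasFDerivAt (fun w => ruledMap γ X jdx idx s (t, w)) _ u :=
    (((hasFDerivAt_const (γ t) u).fun_add
      (HasFDerivAt.fun_sum (u := Finset.univ) fun j _ =>
        (hproj (jdx j)).smul_const (X (jdx j) t))).fun_add
      (HasFDerivAt.fun_sum (u := Finset.univ) fun h _ =>
        (hsh h).smul_const (X (idx h) t))).fun_add
      (HasFDerivAt.fun_sum (u := Finset.univ) fun h _ =>
        (hproj (idx h)).smul_const (X (idx h) t))
  rw [hfd.fderiv]
  simp [add_smul, Finset.sum_add_distrib, add_assoc]

variable {t : ℝ} (u : ι → ℝ) (hli : LinearIndependent ℝ fun i => X i t)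
  (hbij : Bijective (Sum.elim jdx idx))
include hli hbij

theorem injective_fderiv_ruledMap_comp_inr :
    Injective ((fderiv ℝ (ruledMap γ X jdx idx s) (t, u) : ℝ × (ι → ℝ) →ₗ[ℝ] E) ∘ₗ
      LinearMap.inr ℝ ℝ (ι → ℝ)) := by
  refine (injective_iff_map_eq_zero _).mpr fun v hv => ?_
  refine eq_zero_of_sum_smul_add_sum_smul_eq_zero hbij hli
    (fun h => (fderiv ℝ (fun a => s h (t, a)) fun j => u (jdx j) : (κ → ℝ) →ₗ[ℝ] ℝ)) ?_
  simp only [LinearMap.comp_apply, LinearMap.inr_apply, ContinuousLinearMap.coe_coe] at hv ⊢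
  rwa [← fderiv_ruledMap_apply_zero hγ hX hs]

theorem range_fderiv_ruledMap_comp_inr :
    LinearMap.range ((fderiv ℝ (ruledMap γ X jdx idx s) (t, u) : ℝ × (ι → ℝ) →ₗ[ℝ] E) ∘ₗ
      LinearMap.inr ℝ ℝ (ι → ℝ)) = Submodule.span ℝ (Set.range fun i => X i t) := by
  have := FiniteDimensional.span_of_finite ℝ (Set.finite_range fun i => X i t)
  apply Submodule.eq_of_le_of_finrank_eq
  · rintro _ ⟨v, rfl⟩
    simp only [LinearMap.comp_apply, LinearMap.inr_apply, ContinuousLinearMap.coe_coe,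
      fderiv_ruledMap_apply_zero hγ hX hs]
    exact Submodule.add_mem _
      (Submodule.sum_mem _ fun j _ => Submodule.smul_mem _ _ (Submodule.subset_span ⟨_, rfl⟩))
      (Submodule.sum_mem _ fun h _ => Submodule.smul_mem _ _ (Submodule.subset_span ⟨_, rfl⟩))
  · rw [LinearMap.finrank_range_of_inj (injective_fderiv_ruledMap_comp_inr hγ hX hs u hli hbij),
      finrank_span_eq_card hli, Module.finrank_fintype_fun_eq_card]

theorem not_injective_fderiv_ruledMap_iff :
    ¬ Injective (fderiv ℝ (ruledMap γ X jdx idx s) (t, u)) ↔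
      deriv (strictionMap γ X jdx idx s · fun j => u (jdx j)) t
        + ∑ h, u (idx h) • deriv (X (idx h)) t ∈ Submodule.span ℝ (Set.range fun i => X i t) := by
  rw [← range_fderiv_ruledMap_comp_inr hγ hX hs u hli hbij,
    ← fderiv_ruledMap_apply_one_zero hγ hX hs]
  exact LinearMap.not_injective_iff_apply_inl_mem_range _
    (injective_fderiv_ruledMap_comp_inr hγ hX hs u hli hbij)

end RuledMap

theorem stmt_5_general (m n d : ℕ) (hd2 : d ≤ m - 1)
    (γ : ℝ → EuclideanSpace ℝ (Fin (m + n)))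
    (X : Fin (m - 1) → ℝ → EuclideanSpace ℝ (Fin (m + n)))
    (hγ : ContDiff ℝ (⊤ : ℕ∞) γ)
    (hX : ∀ j, ContDiff ℝ (⊤ : ℕ∞) (X j))
    (hON : ∀ t, Orthonormal ℝ (fun j => X j t))
    (D : ℝ → Submodule ℝ (EuclideanSpace ℝ (Fin (m + n))))
    (hD : ∀ t, D t = Submodule.span ℝ (Set.range fun j => X j t))
    (ρ : ℝ → Fin (m - 1) → EuclideanSpace ℝ (Fin (m + n)))
    (hρ : ∀ t j, ρ t j = ↑(Submodule.orthogonalProjectionOnto (D t)ᗮ (deriv (X j) t)))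
    -- index maps: `jdx` enumerates `{1, …, m-d-1}`, `idx` enumerates `{m-d, …, m-1}`
    (jdx : Fin (m - d - 1) → Fin (m - 1)) (hjdx : ∀ j, (jdx j : ℕ) = (j : ℕ))
    (idx : Fin d → Fin (m - 1)) (hidx : ∀ k, (idx k : ℕ) = m - 1 - d + (k : ℕ))
    -- degree-`d` assumptions
    (hind : ∀ t, LinearIndependent ℝ fun k => ρ t (idx k))
    -- the striction submanifold `β`, built from smooth functions `s^{m-d}, …, s^{m-1}`
    (s : Fin d → ℝ × (Fin (m - d - 1) → ℝ) → ℝ) (hs : ∀ h, ContDiff ℝ (⊤ : ℕ∞) (s h))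
    (β : ℝ → (Fin (m - d - 1) → ℝ) → EuclideanSpace ℝ (Fin (m + n)))
    (hβ : ∀ t u, β t u =
      γ t + (∑ j, u j • X (jdx j) t) + ∑ h, s h (t, u) • X (idx h) t)
    (hstr : ∀ (h : Fin d) (t : ℝ) (u : Fin (m - d - 1) → ℝ),
      ⟪deriv (fun τ => β τ u) t, ρ t (idx h)⟫ = 0)
    -- the reparametrization `σ̃` of the ruled submanifold in terms of `β`
    (σt : ℝ × (Fin (m - 1) → ℝ) → EuclideanSpace ℝ (Fin (m + n)))
    (hσt : ∀ (t : ℝ) (u : Fin (m - 1) → ℝ),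
      σt (t, u) = β t (fun j => u (jdx j)) + ∑ h, u (idx h) • X (idx h) t)
    (t : ℝ) (u : Fin (m - 1) → ℝ) :
    ¬ Function.Injective (fderiv ℝ σt (t, u)) ↔
      (∀ h : Fin d, u (idx h) = 0) ∧
      ¬ LinearIndependent ℝ
        (Matrix.vecCons (deriv (fun τ => β τ (fun j => u (jdx j))) t) (fun j => X j t)) := by
  obtain rfl : β = strictionMap γ X jdx idx s := funext fun t => funext fun a => hβ t a
  obtain rfl : σt = ruledMap γ X jdx idx s := funext fun p => hσt p.1 p.2
  have hbij : Bijective (Sum.elim jdx idx) :=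
    bijective_sumElim_of_val_eq hjdx (fun k => by rw [hidx]; omega) (by omega)
  have hli := (hON t).linearIndependent
  rw [not_injective_fderiv_ruledMap_iff (hγ.differentiable (by simp))
      (fun i => (hX i).differentiable (by simp)) (fun h => (hs h).differentiable (by simp))
      u hli hbij, ← hD t,
    Submodule.add_sum_smul_mem_iff (D t) (by simpa only [hρ] using hind t)
      (fun h => by simpa only [hρ] using hstr h t _),
    hD t, not_linearIndependent_vecCons_iff hli]

/-- With `σ̃(t,u) = β(t, u¹, …, u^{m-d-1}) + Σ_h u^h X_h(t)`, the differential
of `σ̃` at `(t,u)` fails to be injective iff `u^{m-d} = ⋯ = u^{m-1} = 0` and the vectors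
`∂β/∂t, X₁(t), …, X_{m-1}(t)` are linearly dependent.  In particular, the only singular points
of the ruled submanifold lie along its striction submanifold `β`. -/
theorem stmt_5 (m n d : ℕ) (hm : 2 ≤ m) (hn : 1 ≤ n) (hd1 : 1 ≤ d) (hd2 : d ≤ m - 1)
    (γ : ℝ → EuclideanSpace ℝ (Fin (m + n)))
    (X : Fin (m - 1) → ℝ → EuclideanSpace ℝ (Fin (m + n)))
    (hγ : ContDiff ℝ (⊤ : ℕ∞) γ) (hγ' : ∀ t, ‖deriv γ t‖ = 1)
    (hX : ∀ j, ContDiff ℝ (⊤ : ℕ∞) (X j))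
    (hON : ∀ t, Orthonormal ℝ (fun j => X j t))
    (D : ℝ → Submodule ℝ (EuclideanSpace ℝ (Fin (m + n))))
    (hD : ∀ t, D t = Submodule.span ℝ (Set.range fun j => X j t))
    (ρ : ℝ → Fin (m - 1) → EuclideanSpace ℝ (Fin (m + n)))
    (hρ : ∀ t j, ρ t j = ↑(Submodule.orthogonalProjectionOnto (D t)ᗮ (deriv (X j) t)))
    -- index maps: `jdx` enumerates `{1, …, m-d-1}`, `idx` enumerates `{m-d, …, m-1}`
    (jdx : Fin (m - d - 1) → Fin (m - 1)) (hjdx : ∀ j, (jdx j : ℕ) = (j : ℕ))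
    (idx : Fin d → Fin (m - 1)) (hidx : ∀ k, (idx k : ℕ) = m - 1 - d + (k : ℕ))
    -- degree-`d` assumptions
    (hdeg : ∀ t, Module.finrank ℝ (Submodule.span ℝ (Set.range fun j => ρ t j)) = d)
    (hind : ∀ t, LinearIndependent ℝ fun k => ρ t (idx k))
    -- the striction submanifold `β`, built from smooth functions `s^{m-d}, …, s^{m-1}`
    (s : Fin d → ℝ × (Fin (m - d - 1) → ℝ) → ℝ) (hs : ∀ h, ContDiff ℝ (⊤ : ℕ∞) (s h))
    (β : ℝ → (Fin (m - d - 1) → ℝ) → EuclideanSpace ℝ (Fin (m + n)))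
    (hβ : ∀ t u, β t u =
      γ t + (∑ j, u j • X (jdx j) t) + ∑ h, s h (t, u) • X (idx h) t)
    (hstr : ∀ (h : Fin d) (t : ℝ) (u : Fin (m - d - 1) → ℝ),
      ⟪deriv (fun τ => β τ u) t, ρ t (idx h)⟫ = 0)
    -- the reparametrization `σ̃` of the ruled submanifold in terms of `β`
    (σt : ℝ × (Fin (m - 1) → ℝ) → EuclideanSpace ℝ (Fin (m + n)))
    (hσt : ∀ (t : ℝ) (u : Fin (m - 1) → ℝ),
      σt (t, u) = β t (fun j => u (jdx j)) + ∑ h, u (idx h) • X (idx h) t)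
    (t : ℝ) (u : Fin (m - 1) → ℝ) :
    ¬ Function.Injective (fderiv ℝ σt (t, u)) ↔
      (∀ h : Fin d, u (idx h) = 0) ∧
      ¬ LinearIndependent ℝ
        (Matrix.vecCons (deriv (fun τ => β τ (fun j => u (jdx j))) t) (fun j => X j t)) :=
  stmt_5_general m n d hd2 γ X hγ hX hON D hD ρ hρ jdx hjdx idx hidx hind s hs β hβ hstr σt hσt t u
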